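/- arXiv:1203.6501 — 2 statements merged into one kernel-verified Lean document; each statement's English description precedes it below -/
import Mathlib

section
/- Let γ ⊂ ℝ² be a rectifiable curve, Q a square, and for k ≥ 1 let #_k(Q) be the number of dyadic subsquares of Q of side length 2^{-k}|Q| that intersect γ. If γ is not contained in Q (i.e., γ meets the complement of Q), then H¹(γ ∩ Q) ≥ c·(2^{-k}·#_k(Q) − 4)·|Q| for a universal constant c > 0. -/
/-!
Call a generation-`k` subsquare `Q'` of `Q` interior if it does not touch `∂Q`, so that
`3Q' ⊆ Q`; all but at most `4 · 2^k` subsquares are interior. Since `γ` is connected and leaves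
`Q`, it leaves `3Q'` for every interior `Q'` it meets, and then `H¹(γ ∩ 3Q') ≥ |Q'|`: the
sup-distance to the centre of `Q'` is `1`-Lipschitz and takes every value between `|Q'|/2` and
`3|Q'|/2` on `γ ∩ 3Q'`. The squares `3Q'` cover each point at most `16` times, so
`16 H¹(γ ∩ Q) ≥ (#_k(Q) - 4 · 2^k) 2^{-k} |Q|`, which is the claim with `c = 1/16`.
-/

open Metric MeasureTheory Filter Set

noncomputable section

/-- An affine line in a real normed space. -/
def IsLine {E : Type*} [NormedAddCommGroup E] [NormedSpace ℝ E] (L : Set E) : Prop :=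
  ∃ a v : E, v ≠ 0 ∧ L = {p | ∃ t : ℝ, p = a + t • v}

/-- The Jones `β`-number of `K` at `x` and scale `r`:
`inf` over affine lines `L` of `sup_{z ∈ K ∩ B(x,r)} dist(z, L) / r`. -/
noncomputable def betaNum {E : Type*} [NormedAddCommGroup E] [NormedSpace ℝ E]
    (K : Set E) (x : E) (r : ℝ) : ℝ :=
  sInf ((fun L => sSup ((fun z => infDist z L) '' (K ∩ closedBall x r)) / r) ''
    {L : Set E | IsLine L})

open scoped Classical

/-- The closed square in the plane with lower-left corner `(a, b)` and side `s`. -/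
def planeSq (a b s : ℝ) : Set (EuclideanSpace ℝ (Fin 2)) :=
  {p | p 0 ∈ Icc a (a + s) ∧ p 1 ∈ Icc b (b + s)}

/-- A curve: a continuous image of `[0,1]`. -/
def IsCurve (γ : Set (EuclideanSpace ℝ (Fin 2))) : Prop :=
  ∃ f : ℝ → EuclideanSpace ℝ (Fin 2), ContinuousOn f (Icc 0 1) ∧ γ = f '' Icc 0 1

/-- The number of generation-`k` dyadic subsquares of the square with corner `(a,b)`
and side `s` which meet `γ`. -/
noncomputable def dyadicCount (γ : Set (EuclideanSpace ℝ (Fin 2))) (a b s : ℝ) (k : ℕ) : ℕ :=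
  Finset.card (Finset.univ.filter (fun p : Fin (2 ^ k) × Fin (2 ^ k) =>
    (γ ∩ planeSq (a + ((p.1 : ℕ) : ℝ) * (s / 2 ^ k)) (b + ((p.2 : ℕ) : ℝ) * (s / 2 ^ k))
      (s / 2 ^ k)).Nonempty))

open scoped NNReal ENNReal

def supDist (m₀ m₁ : ℝ) (x : EuclideanSpace ℝ (Fin 2)) : ℝ := max |x 0 - m₀| |x 1 - m₁|

lemma lipschitzWith_supDist (m₀ m₁ : ℝ) : LipschitzWith 1 (supDist m₀ m₁) := by
  have hcoord (i : Fin 2) (m : ℝ) :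
      LipschitzWith 1 fun x : EuclideanSpace ℝ (Fin 2) => |x i - m| :=
    LipschitzWith.of_dist_le_mul fun x y => by
      rw [NNReal.coe_one, one_mul]
      calc dist |x i - m| |y i - m| ≤ dist (x i) (y i) := by
            simpa only [Real.dist_eq, sub_sub_sub_cancel_right] using
              abs_abs_sub_abs_le_abs_sub (x i - m) (y i - m)
        _ ≤ dist x y := PiLp.dist_apply_le x y i
  have hmax := (hcoord 0 m₀).max (hcoord 1 m₁)
  rw [max_self] at hmax
  exact hmax

lemma mem_planeSq_iff_supDist_le {a b s : ℝ} {x : EuclideanSpace ℝ (Fin 2)} :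
    x ∈ planeSq a b s ↔ supDist (a + s / 2) (b + s / 2) x ≤ s / 2 := by
  simp only [planeSq, supDist, mem_ofPred_eq, mem_Icc, max_le_iff, abs_le]
  constructor <;> rintro ⟨⟨h₁, h₂⟩, h₃, h₄⟩ <;> refine ⟨⟨?_, ?_⟩, ?_, ?_⟩ <;> linarith

lemma isClosed_planeSq (a b s : ℝ) : IsClosed (planeSq a b s) := by
  simp_rw [Set.ext fun _ => mem_planeSq_iff_supDist_le (a := a) (b := b) (s := s)]
  exact isClosed_le (lipschitzWith_supDist _ _).continuous continuous_const

lemma ofReal_sub_le_hausdorffMeasure_inter_sublevel {X : Type*} [EMetricSpace X]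
    [MeasurableSpace X] [BorelSpace X] {S : Set X} (hS : IsPreconnected S) {φ : X → ℝ}
    (hφ : LipschitzWith 1 φ) {x y : X} (hx : x ∈ S) (hy : y ∈ S) {R : ℝ} (hR : R ≤ φ y) :
    ENNReal.ofReal (R - φ x) ≤ μH[1] (S ∩ {z | φ z ≤ R}) := by
  have hIcc : Icc (φ x) R ⊆ φ '' (S ∩ {z | φ z ≤ R}) := by
    rintro t ⟨hxt, htR⟩
    obtain ⟨z, hz, rfl⟩ := (hS.image φ hφ.continuous.continuousOn).Icc_subset
      (mem_image_of_mem φ hx) (mem_image_of_mem φ hy) ⟨hxt, htR.trans hR⟩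
    exact ⟨z, ⟨hz, htR⟩, rfl⟩
  calc ENNReal.ofReal (R - φ x) = μH[1] (Icc (φ x) R) := by
        rw [hausdorffMeasure_real, Real.volume_Icc]
    _ ≤ μH[1] (φ '' (S ∩ {z | φ z ≤ R})) := measure_mono hIcc
    _ ≤ μH[1] (S ∩ {z | φ z ≤ R}) := by
        simpa using hφ.hausdorffMeasure_image_le zero_le_one (S ∩ {z | φ z ≤ R})

/-- `3Q'` for `Q' = planeSq a b s`. -/
def tripleSq (a b s : ℝ) : Set (EuclideanSpace ℝ (Fin 2)) := planeSq (a - s) (b - s) (3 * s)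

lemma ofReal_le_hausdorffMeasure_inter_tripleSq {S : Set (EuclideanSpace ℝ (Fin 2))}
    (hS : IsPreconnected S) {c₀ c₁ h : ℝ} {x y : EuclideanSpace ℝ (Fin 2)}
    (hx : x ∈ S ∩ planeSq c₀ c₁ h) (hy : y ∈ S \ tripleSq c₀ c₁ h) :
    ENNReal.ofReal h ≤ μH[1] (S ∩ tripleSq c₀ c₁ h) := by
  have hT : tripleSq c₀ c₁ h = {z | supDist (c₀ + h / 2) (c₁ + h / 2) z ≤ 3 * h / 2} := by
    ext z
    rw [tripleSq, mem_planeSq_iff_supDist_le, mem_ofPred_eq]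
    ring_nf
  rw [hT] at hy ⊢
  have hxQ := mem_planeSq_iff_supDist_le.1 hx.2
  calc ENNReal.ofReal h ≤ ENNReal.ofReal (3 * h / 2 - supDist (c₀ + h / 2) (c₁ + h / 2) x) :=
        ENNReal.ofReal_le_ofReal (by linarith)
    _ ≤ _ := ofReal_sub_le_hausdorffMeasure_inter_sublevel hS (lipschitzWith_supDist _ _)
        hx.1 hy.1 (not_le.1 hy.2).le

lemma sum_measure_le_mul_of_card_filter_mem_le {α ι : Type*} [MeasurableSpace α]
    (μ : Measure α) (s : Finset ι) {A : ι → Set α} {T : Set α} {n : ℕ}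
    (hA : ∀ i ∈ s, MeasurableSet (A i)) (hAT : ∀ i ∈ s, A i ⊆ T)
    (hcard : ∀ x, (s.filter (x ∈ A ·)).card ≤ n) :
    ∑ i ∈ s, μ (A i) ≤ n * μ T := by
  have hpoint (x : α) : ∑ i ∈ s, (A i).indicator 1 x ≤ (n : ℝ≥0∞) * T.indicator 1 x := by
    by_cases hx : x ∈ T
    · simp only [indicator_apply, Pi.one_apply, Finset.sum_boole, hx, if_true, mul_one]
      exact_mod_cast hcard x
    · rw [indicator_of_notMem hx, mul_zero]
      exact (Finset.sum_eq_zero fun i hi => indicator_of_notMem (fun hxA => hx (hAT i hi hxA)) _).le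
  calc ∑ i ∈ s, μ (A i) = ∑ i ∈ s, ∫⁻ x, (A i).indicator 1 x ∂μ :=
        Finset.sum_congr rfl fun i hi => (lintegral_indicator_one (hA i hi)).symm
    _ = ∫⁻ x, ∑ i ∈ s, (A i).indicator 1 x ∂μ :=
        (lintegral_finsetSum' _ fun i hi => (measurable_one.indicator (hA i hi)).aemeasurable).symm
    _ ≤ ∫⁻ x, (n : ℝ≥0∞) * T.indicator 1 x ∂μ := lintegral_mono hpoint
    _ = n * ∫⁻ x, T.indicator 1 x ∂μ := lintegral_const_mul' _ _ (ENNReal.natCast_ne_top n)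
    _ ≤ n * μ T := by gcongr; exact lintegral_indicator_one_le T

lemma card_le_add_one_of_forall_le_add {s : Finset ℕ} {d : ℕ}
    (h : ∀ i ∈ s, ∀ j ∈ s, i ≤ j + d) : s.card ≤ d + 1 := by
  rcases s.eq_empty_or_nonempty with rfl | hne
  · simp
  calc s.card ≤ (Finset.Icc (s.min' hne) (s.min' hne + d)).card :=
        Finset.card_le_card fun i hi =>
          Finset.mem_Icc.2 ⟨s.min'_le i hi, h i hi _ (s.min'_mem hne)⟩
    _ = d + 1 := by rw [Nat.card_Icc]; omega

lemma card_filter_mem_Icc_le_four (N : ℕ) {h : ℝ} (hh : 0 < h) (c v : ℝ) :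
    (Finset.univ.filter fun i : Fin N =>
      v ∈ Icc (c + (i : ℕ) * h - h) (c + (i : ℕ) * h - h + 3 * h)).card ≤ 4 := by
  rw [← Finset.card_image_of_injective _ Fin.val_injective]
  refine card_le_add_one_of_forall_le_add fun i hi j hj => ?_
  obtain ⟨i, hi', rfl⟩ := Finset.mem_image.1 hi
  obtain ⟨j, hj', rfl⟩ := Finset.mem_image.1 hj
  have hvi := (Finset.mem_filter.1 hi').2.1
  have hvj := (Finset.mem_filter.1 hj').2.2
  have : ((i : ℕ) : ℝ) * h ≤ ((j : ℕ) + 3 : ℝ) * h := by linarith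
  exact_mod_cast le_of_mul_le_mul_right this hh

lemma card_filter_mem_tripleSq_le (N : ℕ) {h : ℝ} (hh : 0 < h) (a b : ℝ)
    (x : EuclideanSpace ℝ (Fin 2)) :
    (Finset.univ.filter fun p : Fin N × Fin N =>
      x ∈ tripleSq (a + (p.1 : ℕ) * h) (b + (p.2 : ℕ) * h) h).card ≤ 16 := by
  calc _ ≤ ((Finset.univ.filter fun i : Fin N =>
          x 0 ∈ Icc (a + (i : ℕ) * h - h) (a + (i : ℕ) * h - h + 3 * h)) ×ˢ
        (Finset.univ.filter fun j : Fin N =>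
          x 1 ∈ Icc (b + (j : ℕ) * h - h) (b + (j : ℕ) * h - h + 3 * h))).card :=
        Finset.card_le_card fun p hp => Finset.mem_product.2
          ⟨Finset.mem_filter.2 ⟨Finset.mem_univ _, (Finset.mem_filter.1 hp).2.1⟩,
            Finset.mem_filter.2 ⟨Finset.mem_univ _, (Finset.mem_filter.1 hp).2.2⟩⟩
    _ ≤ 4 * 4 := by
        rw [Finset.card_product]
        exact Nat.mul_le_mul (card_filter_mem_Icc_le_four N hh a (x 0))
          (card_filter_mem_Icc_le_four N hh b (x 1))

def IsInteriorIndex {N : ℕ} (i : Fin N) : Prop := 1 ≤ (i : ℕ) ∧ (i : ℕ) + 2 ≤ N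

lemma card_filter_not_isInteriorIndex_le (N : ℕ) :
    (Finset.univ.filter fun i : Fin N => ¬ IsInteriorIndex i).card ≤ 2 := by
  rw [← Finset.card_image_of_injective _ Fin.val_injective]
  calc _ ≤ ({0, N - 1} : Finset ℕ).card := Finset.card_le_card fun n hn => by
          obtain ⟨i, hi, rfl⟩ := Finset.mem_image.1 hn
          have hi' := (Finset.mem_filter.1 hi).2
          have := i.isLt
          simp only [IsInteriorIndex] at hi'
          simp only [Finset.mem_insert, Finset.mem_singleton]
          omega
    _ ≤ 2 := Finset.card_le_two

lemma card_filter_le_card_filter_and_isInteriorIndex_add (N : ℕ) (P : Fin N × Fin N → Prop) :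
    (Finset.univ.filter P).card ≤
      (Finset.univ.filter fun p => P p ∧ IsInteriorIndex p.1 ∧ IsInteriorIndex p.2).card +
        4 * N := by
  set E := Finset.univ.filter fun i : Fin N => ¬ IsInteriorIndex i
  have hE := card_filter_not_isInteriorIndex_le N
  calc _ ≤ ((Finset.univ.filter fun p => P p ∧ IsInteriorIndex p.1 ∧ IsInteriorIndex p.2) ∪
          (E ×ˢ Finset.univ ∪ Finset.univ ×ˢ E)).card := Finset.card_le_card fun p hp => by
          simp only [E, Finset.mem_union, Finset.mem_product, Finset.mem_filter, Finset.mem_univ,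
            true_and, and_true] at hp ⊢
          tauto
    _ ≤ (Finset.univ.filter fun p => P p ∧ IsInteriorIndex p.1 ∧ IsInteriorIndex p.2).card +
          (E.card * N + N * E.card) :=
        (Finset.card_union_le _ _).trans (Nat.add_le_add_left
          ((Finset.card_union_le _ _).trans_eq (by simp [Finset.card_product])) _)
    _ ≤ _ := by nlinarith

lemma tripleSq_subset_planeSq {N : ℕ} {h : ℝ} (hh : 0 ≤ h) (a b : ℝ) {p : Fin N × Fin N}
    (hp : IsInteriorIndex p.1 ∧ IsInteriorIndex p.2) :
    tripleSq (a + (p.1 : ℕ) * h) (b + (p.2 : ℕ) * h) h ⊆ planeSq a b (N * h) := by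
  obtain ⟨⟨hi₁, hi₂⟩, hj₁, hj₂⟩ := hp
  have hi₁' : (1 : ℝ) ≤ (p.1 : ℕ) := by exact_mod_cast hi₁
  have hi₂' : ((p.1 : ℕ) : ℝ) + 2 ≤ N := by exact_mod_cast hi₂
  have hj₁' : (1 : ℝ) ≤ (p.2 : ℕ) := by exact_mod_cast hj₁
  have hj₂' : ((p.2 : ℕ) : ℝ) + 2 ≤ N := by exact_mod_cast hj₂
  rintro x ⟨⟨h₁, h₂⟩, h₃, h₄⟩
  refine ⟨⟨?_, ?_⟩, ?_, ?_⟩ <;> nlinarith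

def gridSq (a b h : ℝ) {N : ℕ} (p : Fin N × Fin N) : Set (EuclideanSpace ℝ (Fin 2)) :=
  planeSq (a + (p.1 : ℕ) * h) (b + (p.2 : ℕ) * h) h

def interiorGridCount (S : Set (EuclideanSpace ℝ (Fin 2))) (a b h : ℝ) (N : ℕ) : ℕ :=
  (Finset.univ.filter fun p : Fin N × Fin N =>
    (S ∩ gridSq a b h p).Nonempty ∧ IsInteriorIndex p.1 ∧ IsInteriorIndex p.2).card

lemma dyadicCount_le_interiorGridCount_add (γ : Set (EuclideanSpace ℝ (Fin 2))) (a b s : ℝ)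
    (k : ℕ) :
    dyadicCount γ a b s k ≤ interiorGridCount γ a b (s / 2 ^ k) (2 ^ k) + 4 * 2 ^ k :=
  card_filter_le_card_filter_and_isInteriorIndex_add _ _

lemma ofReal_mul_le_hausdorffMeasure_inter_planeSq {S : Set (EuclideanSpace ℝ (Fin 2))}
    (hS : IsPreconnected S) (hSc : IsClosed S) {N : ℕ} {h : ℝ} (hh : 0 < h) {a b : ℝ}
    (hout : (S \ planeSq a b (N * h)).Nonempty) :
    ENNReal.ofReal (interiorGridCount S a b h N * h) ≤ 16 * μH[1] (S ∩ planeSq a b (N * h)) := by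
  obtain ⟨y, hyS, hyQ⟩ := hout
  set F := Finset.univ.filter fun p : Fin N × Fin N =>
    (S ∩ gridSq a b h p).Nonempty ∧ IsInteriorIndex p.1 ∧ IsInteriorIndex p.2
  have hsub (p) (hp : p ∈ F) := tripleSq_subset_planeSq hh.le a b (Finset.mem_filter.1 hp).2.2
  calc ENNReal.ofReal (F.card * h) = ∑ _p ∈ F, ENNReal.ofReal h := by
        rw [ENNReal.ofReal_mul (Nat.cast_nonneg _), ENNReal.ofReal_natCast]
        simp
    _ ≤ ∑ p ∈ F, μH[1] (S ∩ tripleSq (a + (p.1 : ℕ) * h) (b + (p.2 : ℕ) * h) h) :=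
        Finset.sum_le_sum fun p hp => by
          obtain ⟨x, hx⟩ := (Finset.mem_filter.1 hp).2.1
          exact ofReal_le_hausdorffMeasure_inter_tripleSq hS hx ⟨hyS, fun hy => hyQ (hsub p hp hy)⟩
    _ ≤ ((16 : ℕ) : ℝ≥0∞) * μH[1] (S ∩ planeSq a b (N * h)) :=
        sum_measure_le_mul_of_card_filter_mem_le _ _
          (fun _ _ => (hSc.inter (isClosed_planeSq _ _ _)).measurableSet)
          (fun p hp => inter_subset_inter_right _ (hsub p hp))
          (fun x => (Finset.card_le_card fun p hp => by
              simp only [Finset.mem_filter, Finset.mem_univ, true_and] at hp ⊢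
              exact hp.2.2).trans (card_filter_mem_tripleSq_le N hh a b x))
    _ = 16 * μH[1] (S ∩ planeSq a b (N * h)) := by norm_num

/-- if a rectifiable curve `γ` meets the complement of a square `Q`
of side `s`, then `H¹(γ ∩ Q) ≥ c·(2^{-k}·#_k(Q) − 4)·s`, where `#_k(Q)` is the number
of generation-`k` dyadic subsquares of `Q` meeting `γ`, with `c > 0` universal. -/
theorem length_from_dyadic_count :
    ∃ c : ℝ, 0 < c ∧
      ∀ (γ : Set (EuclideanSpace ℝ (Fin 2))) (a b s : ℝ) (k : ℕ), 0 < s → 1 ≤ k →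
        IsCurve γ → μH[1] γ < ⊤ → (γ ∩ (planeSq a b s)ᶜ).Nonempty →
        ENNReal.ofReal (c * (((2 : ℝ) ^ k)⁻¹ * (dyadicCount γ a b s k : ℝ) - 4) * s) ≤
          μH[1] (γ ∩ planeSq a b s) := by
  refine ⟨1 / 16, by norm_num, ?_⟩
  rintro γ a b s k hs - ⟨f, hf, rfl⟩ - hout
  have hside : ((2 ^ k : ℕ) : ℝ) * (s / 2 ^ k) = s := by push_cast; field_simp
  have hlength := ofReal_mul_le_hausdorffMeasure_inter_planeSq (isPreconnected_Icc.image f hf)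
    (isCompact_Icc.image_of_continuousOn hf).isClosed (by positivity) (hside ▸ hout)
  rw [hside] at hlength
  have hcount : (dyadicCount (f '' Icc 0 1) a b s k : ℝ) ≤
      interiorGridCount (f '' Icc 0 1) a b (s / 2 ^ k) (2 ^ k) + 4 * 2 ^ k := by
    exact_mod_cast dyadicCount_le_interiorGridCount_add _ a b s k
  have hreal : 16 * (1 / 16 * (((2 : ℝ) ^ k)⁻¹ * dyadicCount (f '' Icc 0 1) a b s k - 4) * s) ≤
      interiorGridCount (f '' Icc 0 1) a b (s / 2 ^ k) (2 ^ k) * (s / 2 ^ k) := by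
    rw [show ∀ n : ℝ, 16 * (1 / 16 * (((2 : ℝ) ^ k)⁻¹ * n - 4) * s) =
      (n - 4 * 2 ^ k) * (s / 2 ^ k) from fun n => by field_simp]
    gcongr
    linarith
  rw [← ENNReal.mul_le_mul_iff_right (by norm_num : (16 : ℝ≥0∞) ≠ 0) (by norm_num)]
  refine Eq.trans_le ?_ ((ENNReal.ofReal_le_ofReal hreal).trans hlength)
  rw [ENNReal.ofReal_mul (p := 16) (by norm_num), ENNReal.ofReal_ofNat]
end
end

section
/- Let K be the four-corners-type Cantor set in [0,1]² constructed with ratios a_n = n²/(n+1)²: at step n+1 each square of generation n of side |S_n| is replaced by the four corner squares of side |S_{n+1}| = (a_{n+1}/4)|S_n|, and W = ∩_n ∪_i S_n^i. Then dim_H(W) = 1 and H¹(W) = 0. -/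
open Metric MeasureTheory Filter Set

noncomputable section

/-- Side length of generation-`n` squares: `|S_n| = 4^{-n}·∏_{i=1}^n a_i` with
`a_i = i²/(i+1)²`, i.e. `|S_n| = 4^{-n}/(n+1)²`. -/
noncomputable def sideLen (n : ℕ) : ℝ := 1 / (4 ^ n * ((n : ℝ) + 1) ^ 2)

/-- First coordinate of the corner of the generation-`n` square encoded by the
sequence of corner choices `σ`. -/
noncomputable def cornerX (n : ℕ) (σ : Fin n → Bool × Bool) : ℝ :=
  ∑ i : Fin n, if (σ i).1 then sideLen (i : ℕ) - sideLen ((i : ℕ) + 1) else 0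

/-- Second coordinate of the corner of the generation-`n` square encoded by `σ`. -/
noncomputable def cornerY (n : ℕ) (σ : Fin n → Bool × Bool) : ℝ :=
  ∑ i : Fin n, if (σ i).2 then sideLen (i : ℕ) - sideLen ((i : ℕ) + 1) else 0

/-- The modified four-corners Cantor set with ratios `a_n = n²/(n+1)²`. -/
def fourCornersW : Set (EuclideanSpace ℝ (Fin 2)) :=
  ⋂ n : ℕ, ⋃ σ : Fin n → Bool × Bool,
    planeSq (cornerX n σ) (cornerY n σ) (sideLen n)

/-!
Covering `W` by its `4ⁿ` generation-`n` squares, of diameter at most `2 |S_n|` where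
`4ⁿ |S_n| = 1 / (n + 1)²`, gives `H¹(W) = 0` and hence `dim_H W ≤ 1`.

For the lower bound, send `t ∈ [0, 1)` to the point of `W` whose corner choices are the base-`4`
digits of `t`. If the digits of `t` and `t'` first differ at place `k`, then `|t - t'| < 4⁻ᵏ`,
while the images lie in different squares of generation `k + 1`, at distance at least `|S_{k+1}|`.
As `|S_n| = 4⁻ⁿ / (n + 1)²` decays more slowly than `4^{-n/r}` for every `r < 1`, the inverse
of this map is `r`-Hölder, so `1 = dim_H [0, 1) ≤ dim_H W / r`.
-/

open scoped ENNReal NNReal Topology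

theorem dimH_le_dimH_image_div_of_dist_le {X Y : Type*} [MetricSpace X] [MetricSpace Y]
    {f : X → Y} {s : Set X} {C r : ℝ≥0} (hr : 0 < r)
    (h : ∀ x ∈ s, ∀ y ∈ s, dist x y ≤ C * dist (f x) (f y) ^ (r : ℝ)) :
    dimH s ≤ dimH (f '' s) / r := by
  rcases s.eq_empty_or_nonempty with rfl | ⟨x₀, -⟩
  · simp
  have : Nonempty X := ⟨x₀⟩
  have hinj : InjOn f s := fun x hx y hy hxy => dist_le_zero.1 <| by
    simpa [hxy, Real.zero_rpow (NNReal.coe_ne_zero.2 hr.ne')] using h x hx y hy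
  have hinv : HolderOnWith C r (Function.invFunOn f s) (f '' s) := by
    rintro _ ⟨x, hx, rfl⟩ _ ⟨y, hy, rfl⟩
    rw [hinj.leftInvOn_invFunOn hx, hinj.leftInvOn_invFunOn hy, edist_dist, edist_dist,
      ENNReal.ofReal_rpow_of_nonneg dist_nonneg r.coe_nonneg, ← ENNReal.ofReal_coe_nnreal,
      ← ENNReal.ofReal_mul C.coe_nonneg]
    exact ENNReal.ofReal_le_ofReal (h x hx y hy)
  simpa [hinj.leftInvOn_invFunOn.image_image] using hinv.dimH_image_le hr

namespace FourCorners

lemma sideLen_pos (n : ℕ) : 0 < sideLen n := by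
  unfold sideLen; positivity

lemma four_mul_sideLen_succ_le (n : ℕ) : 4 * sideLen (n + 1) ≤ sideLen n := by
  unfold sideLen
  rw [mul_one_div, div_le_div_iff₀ (by positivity) (by positivity), pow_succ (4 : ℝ) n]
  push_cast
  have : (0 : ℝ) < 4 ^ n := by positivity
  nlinarith [(n.cast_nonneg : (0 : ℝ) ≤ n)]

lemma four_pow_mul_sideLen (n : ℕ) : 4 ^ n * sideLen n = 1 / ((n : ℝ) + 1) ^ 2 := by
  unfold sideLen
  field_simp

lemma tendsto_sideLen : Tendsto sideLen atTop (𝓝 0) := by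
  refine tendsto_const_nhds.div_atTop (Tendsto.atTop_mul_atTop₀
    (tendsto_pow_atTop_atTop_of_one_lt (by norm_num)) ?_)
  exact (tendsto_pow_atTop two_ne_zero).comp
    (tendsto_atTop_add_const_right _ 1 tendsto_natCast_atTop_atTop)

def gap (n : ℕ) : ℝ := sideLen n - sideLen (n + 1)

lemma gap_nonneg (n : ℕ) : 0 ≤ gap n := by
  unfold gap; linarith [four_mul_sideLen_succ_le n, sideLen_pos (n + 1)]

lemma hasSum_gap_add (n : ℕ) : HasSum (fun i => gap (i + n)) (sideLen n) := by
  refine (hasSum_iff_tendsto_nat_of_nonneg (fun i => gap_nonneg _) _).2 ?_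
  have htele : ∀ m, ∑ i ∈ Finset.range m, gap (i + n) = sideLen n - sideLen (m + n) :=
    fun m => by
      simpa [gap, add_right_comm _ 1 n] using Finset.sum_range_sub' (fun i => sideLen (i + n)) m
  simp_rw [htele]
  simpa using tendsto_const_nhds.sub (tendsto_sideLen.comp (tendsto_add_atTop_nat n))

def coord (b : ℕ → Bool) : ℝ := ∑' i, if b i then gap i else 0

def partialCoord (n : ℕ) (b : ℕ → Bool) : ℝ :=
  ∑ i ∈ Finset.range n, if b i then gap i else 0

lemma partialCoord_succ (n : ℕ) (b : ℕ → Bool) :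
    partialCoord (n + 1) b = partialCoord n b + if b n then gap n else 0 :=
  Finset.sum_range_succ _ n

lemma partialCoord_congr {n : ℕ} {b b' : ℕ → Bool} (h : ∀ i < n, b i = b' i) :
    partialCoord n b = partialCoord n b' :=
  Finset.sum_congr rfl fun i hi => by rw [h i (Finset.mem_range.1 hi)]

lemma coord_mem_Icc (b : ℕ → Bool) (n : ℕ) :
    coord b ∈ Icc (partialCoord n b) (partialCoord n b + sideLen n) := by
  have hnonneg : ∀ i, 0 ≤ if b i then gap i else 0 := fun i => by
    split_ifs <;> simp [gap_nonneg]
  have hle : ∀ i, (if b i then gap i else 0) ≤ gap i := fun i => by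
    split_ifs <;> simp [gap_nonneg]
  have hs : Summable fun i => if b i then gap i else 0 :=
    .of_nonneg_of_le hnonneg hle (by simpa using (hasSum_gap_add 0).summable)
  have htail : ∑' i, (if b (i + n) then gap (i + n) else 0) ≤ sideLen n :=
    (hasSum_gap_add n).tsum_eq ▸ ((summable_nat_add_iff n).2 hs).tsum_le_tsum (fun i => hle _)
      (hasSum_gap_add n).summable
  rw [coord, ← hs.sum_add_tsum_nat_add n]
  exact ⟨le_add_of_nonneg_right (tsum_nonneg fun i => hnonneg _), add_le_add_right htail _⟩

lemma sideLen_sub_le_abs_coord_sub {b b' : ℕ → Bool} {k : ℕ} (hagree : ∀ i < k, b i = b' i)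
    (hk : b k ≠ b' k) : sideLen k - 2 * sideLen (k + 1) ≤ |coord b - coord b'| := by
  wlog hbk : b k = false generalizing b b'
  · rw [abs_sub_comm]
    exact this (fun i hi => (hagree i hi).symm) hk.symm (by simp_all)
  have hb'k : b' k = true := by simp_all
  have hb := (coord_mem_Icc b (k + 1)).2
  have hb' := (coord_mem_Icc b' (k + 1)).1
  rw [partialCoord_succ, hbk] at hb
  rw [partialCoord_succ, hb'k, ← partialCoord_congr hagree] at hb'
  simp only [Bool.false_eq_true, if_false, if_true, add_zero, gap] at hb hb'
  rw [abs_sub_comm]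
  exact (le_abs_self _).trans' (by linarith)

def point (c : ℕ → Bool × Bool) : EuclideanSpace ℝ (Fin 2) :=
  !₂[coord fun i => (c i).1, coord fun i => (c i).2]

lemma point_mem_fourCornersW (c : ℕ → Bool × Bool) : point c ∈ fourCornersW := by
  refine mem_iInter.2 fun n => mem_iUnion.2 ⟨fun i => c i, ?_⟩
  have hx : cornerX n (fun i => c i) = partialCoord n fun i => (c i).1 :=
    Fin.sum_univ_eq_sum_range (fun i => if (c i).1 then gap i else 0) n
  have hy : cornerY n (fun i => c i) = partialCoord n fun i => (c i).2 :=
    Fin.sum_univ_eq_sum_range (fun i => if (c i).2 then gap i else 0) n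
  rw [planeSq, hx, hy]
  exact ⟨coord_mem_Icc _ n, coord_mem_Icc _ n⟩

lemma sideLen_sub_le_dist_point {c c' : ℕ → Bool × Bool} {k : ℕ}
    (hagree : ∀ i < k, c i = c' i) (hk : c k ≠ c' k) :
    sideLen k - 2 * sideLen (k + 1) ≤ dist (point c) (point c') := by
  rcases not_and_or.1 (mt Prod.ext_iff.2 hk) with h | h
  · exact (sideLen_sub_le_abs_coord_sub (fun i hi => by rw [hagree i hi]) h).trans
      (PiLp.dist_apply_le (point c) (point c') 0)
  · exact (sideLen_sub_le_abs_coord_sub (fun i hi => by rw [hagree i hi]) h).trans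
      (PiLp.dist_apply_le (point c) (point c') 1)

lemma ediam_planeSq_le (a b : ℝ) {s : ℝ} (hs : 0 ≤ s) :
    ediam (planeSq a b s) ≤ ENNReal.ofReal (2 * s) := by
  refine ediam_le_of_forall_dist_le fun z hz w hw => ?_
  have h0 : dist (z 0) (w 0) ≤ s := by simpa using Real.dist_le_of_mem_Icc hz.1 hw.1
  have h1 : dist (z 1) (w 1) ≤ s := by simpa using Real.dist_le_of_mem_Icc hz.2 hw.2
  rw [EuclideanSpace.dist_eq, Fin.sum_univ_two, Real.sqrt_le_left (by positivity)]
  nlinarith [dist_nonneg (x := z 0) (y := w 0), dist_nonneg (x := z 1) (y := w 1)]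

lemma hausdorffMeasure_one_fourCornersW : μH[1] fourCornersW = 0 := by
  have hcover := Measure.hausdorffMeasure_le_liminf_sum 1 fourCornersW (l := atTop)
    (fun n => ENNReal.ofReal (2 * sideLen n))
    (by simpa using ENNReal.tendsto_ofReal (tendsto_sideLen.const_mul 2))
    (fun n (σ : Fin n → Bool × Bool) => planeSq (cornerX n σ) (cornerY n σ) (sideLen n))
    (.of_forall fun n σ => ediam_planeSq_le _ _ (sideLen_pos n).le)
    (.of_forall fun n => iInter_subset _ n)
  have hsum : ∀ n, ∑ σ : Fin n → Bool × Bool,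
      ediam (planeSq (cornerX n σ) (cornerY n σ) (sideLen n)) ^ (1 : ℝ) ≤
        ENNReal.ofReal (2 / ((n : ℝ) + 1) ^ 2) := fun n => by
    calc _ ≤ ∑ _σ : Fin n → Bool × Bool, ENNReal.ofReal (2 * sideLen n) :=
          Finset.sum_le_sum fun σ _ => by
            simpa using ediam_planeSq_le _ _ (sideLen_pos n).le
      _ = ENNReal.ofReal (2 / ((n : ℝ) + 1) ^ 2) := by
          rw [Finset.sum_const, Finset.card_univ, nsmul_eq_mul, ← ENNReal.ofReal_natCast,
            ← ENNReal.ofReal_mul (by positivity)]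
          congr 1
          simp only [Fintype.card_fun, Fintype.card_prod, Fintype.card_bool, Fintype.card_fin]
          push_cast
          rw [mul_left_comm, four_pow_mul_sideLen]
          ring
  have hlim : Tendsto (fun n : ℕ => ENNReal.ofReal (2 / ((n : ℝ) + 1) ^ 2)) atTop (𝓝 0) := by
    simpa using ENNReal.tendsto_ofReal (tendsto_const_nhds.div_atTop
      ((tendsto_pow_atTop two_ne_zero).comp
        (tendsto_atTop_add_const_right _ 1 tendsto_natCast_atTop_atTop)))
  exact le_antisymm
    (hcover.trans ((liminf_le_liminf (.of_forall hsum)).trans hlim.liminf_eq.le)) zero_le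

lemma exists_inv_four_pow_le_mul_sideLen_rpow {r : ℝ} (hr : r < 1) :
    ∃ C : ℝ≥0, ∀ n, (4 : ℝ)⁻¹ ^ n ≤ C * sideLen n ^ r := by
  set q : ℝ := (4 : ℝ) ^ (r - 1)
  have hq0 : 0 < q := by positivity
  have hq1 : q < 1 := Real.rpow_lt_one_of_one_lt_of_neg (by norm_num) (by linarith)
  have hlim : Tendsto (fun n : ℕ => ((n : ℝ) + 1) ^ 2 * q ^ n) atTop (𝓝 0) := by
    have := ((tendsto_pow_const_mul_const_pow_of_lt_one 2 hq0.le hq1).comp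
      (tendsto_add_atTop_nat 1)).div_const q
    refine (this.congr fun n => ?_).trans (by simp)
    simp only [Function.comp_apply, Nat.cast_add, Nat.cast_one, pow_succ q n]
    field_simp
  obtain ⟨M, hM⟩ := hlim.bddAbove_range
  refine ⟨M.toNNReal, fun n => ?_⟩
  have hbound : ((n : ℝ) + 1) ^ 2 * q ^ n ≤ M := hM ⟨n, rfl⟩
  have hpoly : (((n : ℝ) + 1) ^ 2) ^ r ≤ ((n : ℝ) + 1) ^ 2 :=
    Real.rpow_le_self_of_one_le (one_le_pow₀ (by linarith [(n.cast_nonneg : (0 : ℝ) ≤ n)]))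
      hr.le
  have hside : sideLen n ^ r * (((4 : ℝ) ^ r) ^ n * (((n : ℝ) + 1) ^ 2) ^ r) = 1 := by
    rw [sideLen, one_div, Real.inv_rpow (by positivity),
      Real.mul_rpow (by positivity) (by positivity), ← Real.rpow_pow_comm (by norm_num)]
    field_simp
  have hq : (4 : ℝ)⁻¹ ^ n * ((4 : ℝ) ^ r) ^ n = q ^ n := by
    rw [← mul_pow, show q = (4 : ℝ) ^ (r - 1) from rfl, Real.rpow_sub_one (by norm_num),
      inv_mul_eq_div]
  calc (4 : ℝ)⁻¹ ^ n
        = (4 : ℝ)⁻¹ ^ n *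
            (sideLen n ^ r * (((4 : ℝ) ^ r) ^ n * (((n : ℝ) + 1) ^ 2) ^ r)) := by
          rw [hside, mul_one]
      _ = sideLen n ^ r * (q ^ n * (((n : ℝ) + 1) ^ 2) ^ r) := by rw [← hq]; ring
      _ ≤ sideLen n ^ r * M := by
          gcongr
          · exact (Real.rpow_pos_of_pos (sideLen_pos n) r).le
          · nlinarith [pow_pos hq0 n]
      _ ≤ M.toNNReal * sideLen n ^ r := by
          rw [mul_comm]
          exact mul_le_mul_of_nonneg_right M.le_coe_toNNReal
            (Real.rpow_nonneg (sideLen_pos n).le r)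

def digit (k : ℕ) (t : ℝ) : ℤ := ⌊4 ^ (k + 1) * t⌋ % 4

lemma floor_four_pow_succ_mul (k : ℕ) (t : ℝ) :
    ⌊4 ^ (k + 1) * t⌋ = 4 * ⌊4 ^ k * t⌋ + digit k t := by
  have h := Int.floor_div_natCast (4 ^ (k + 1) * t) 4
  rw [show 4 ^ (k + 1) * t / ((4 : ℕ) : ℝ) = 4 ^ k * t by push_cast; ring] at h
  rw [h, digit]
  exact (Int.mul_ediv_add_emod _ 4).symm

lemma floor_four_pow_mul_eq {t t' : ℝ} (h0 : ⌊t⌋ = ⌊t'⌋) {k : ℕ}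
    (h : ∀ i < k, digit i t = digit i t') : ⌊4 ^ k * t⌋ = ⌊4 ^ k * t'⌋ := by
  induction k with
  | zero => simpa using h0
  | succ k ih =>
    rw [floor_four_pow_succ_mul, floor_four_pow_succ_mul, ih fun i hi => h i (by omega),
      h k (by omega)]

lemma abs_sub_lt_of_floor_four_pow_mul_eq {t t' : ℝ} {k : ℕ}
    (h : ⌊4 ^ k * t⌋ = ⌊4 ^ k * t'⌋) : |t - t'| < 4⁻¹ ^ k := by
  have h1 := Int.abs_sub_lt_one_of_floor_eq_floor h
  rw [← mul_sub, abs_mul, abs_of_pos (by positivity)] at h1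
  rwa [inv_pow, ← one_div, lt_div_iff₀' (by positivity)]

lemma exists_digit_ne {t t' : ℝ} (h0 : ⌊t⌋ = ⌊t'⌋) (hne : t ≠ t') :
    ∃ k, digit k t ≠ digit k t' := by
  by_contra! h
  have hclose : ∀ k : ℕ, |t - t'| ≤ 4⁻¹ ^ k := fun k =>
    (abs_sub_lt_of_floor_four_pow_mul_eq (floor_four_pow_mul_eq h0 fun i _ => h i)).le
  have := ge_of_tendsto' (tendsto_pow_atTop_nhds_zero_of_lt_one (by norm_num) (by norm_num)) hclose
  exact hne (sub_eq_zero.1 (abs_nonpos_iff.1 this))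

def digitCorner (d : ℤ) : Bool × Bool := (d % 2 = 1, 2 ≤ d)

def digitCode (t : ℝ) (k : ℕ) : Bool × Bool := digitCorner (digit k t)

lemma digitCorner_injOn : InjOn digitCorner (Ico 0 4) := by
  intro d ⟨hd0, hd4⟩ d' ⟨hd0', hd4'⟩ h
  simp only [digitCorner, Prod.mk.injEq, decide_eq_decide] at h
  omega

lemma digit_mem_Ico (k : ℕ) (t : ℝ) : digit k t ∈ Ico 0 4 :=
  ⟨Int.emod_nonneg _ (by norm_num), Int.emod_lt_of_pos _ (by norm_num)⟩

lemma exists_dist_le_mul_dist_point_digitCode_rpow {r : ℝ≥0} (hr : r < 1) :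
    ∃ C : ℝ≥0, ∀ t ∈ Ico (0 : ℝ) 1, ∀ t' ∈ Ico (0 : ℝ) 1,
      dist t t' ≤ C * dist (point (digitCode t)) (point (digitCode t')) ^ (r : ℝ) := by
  obtain ⟨C, hC⟩ := exists_inv_four_pow_le_mul_sideLen_rpow (r := r) (mod_cast hr)
  refine ⟨4 * C, fun t ht t' ht' => ?_⟩
  rcases eq_or_ne t t' with rfl | hne
  · rw [dist_self]; positivity
  have h0 : ⌊t⌋ = ⌊t'⌋ := by rw [Int.floor_eq_zero_iff.2 ht, Int.floor_eq_zero_iff.2 ht']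
  classical
  have hex := exists_digit_ne h0 hne
  set k := Nat.find hex
  have hagree : ∀ i < k, digit i t = digit i t' := fun i hi => not_not.1 (Nat.find_min hex hi)
  have hclose : dist t t' < 4⁻¹ ^ k :=
    abs_sub_lt_of_floor_four_pow_mul_eq (floor_four_pow_mul_eq h0 hagree)
  have hfar : sideLen (k + 1) ≤ dist (point (digitCode t)) (point (digitCode t')) :=
    (sideLen_sub_le_dist_point (fun i hi => by simp only [digitCode, hagree i hi])
      (digitCorner_injOn.ne (digit_mem_Ico k t) (digit_mem_Ico k t') (Nat.find_spec hex))).trans'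
      (by linarith [four_mul_sideLen_succ_le k, sideLen_pos (k + 1)])
  calc dist t t' ≤ 4 * 4⁻¹ ^ (k + 1) := by rw [pow_succ]; linarith
    _ ≤ 4 * (C * sideLen (k + 1) ^ (r : ℝ)) := by gcongr; exact hC _
    _ ≤ (4 * C : ℝ≥0) * dist (point (digitCode t)) (point (digitCode t')) ^ (r : ℝ) := by
        push_cast; rw [mul_assoc]; gcongr; exact (sideLen_pos _).le

lemma le_dimH_fourCornersW {r : ℝ≥0} (hr : r < 1) : (r : ℝ≥0∞) ≤ dimH fourCornersW := by
  rcases eq_or_ne r 0 with rfl | hr0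
  · simp
  obtain ⟨C, hC⟩ := exists_dist_le_mul_dist_point_digitCode_rpow hr
  have h := dimH_le_dimH_image_div_of_dist_le (pos_iff_ne_zero.2 hr0) hC
  rw [Real.dimH_of_nonempty_interior (by simp), Module.finrank_self, Nat.cast_one,
    ENNReal.le_div_iff_mul_le (.inl (by simpa using hr0)) (.inl (by simp)), one_mul] at h
  exact h.trans (dimH_mono (image_subset_iff.2 fun t _ => point_mem_fourCornersW _))

end FourCorners

/-- the modified four-corners Cantor set `W` built with ratios
`a_n = n²/(n+1)²` satisfies `dim_H(W) = 1` and `H¹(W) = 0`. -/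
theorem fourCorners_dimH_eq_one_and_H1_zero :
    dimH fourCornersW = 1 ∧ μH[1] fourCornersW = 0 := by
  have hH1 : μH[1] fourCornersW = 0 := FourCorners.hausdorffMeasure_one_fourCornersW
  refine ⟨le_antisymm ?_ (ENNReal.le_of_forall_nnreal_lt fun r hr =>
    FourCorners.le_dimH_fourCornersW (mod_cast hr)), hH1⟩
  simpa using dimH_le_of_hausdorffMeasure_ne_top (d := 1) (by simp [hH1])
end
end
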